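/- arXiv:2407.13877 — 4 statements merged into one kernel-verified Lean document; each statement's English description precedes it below -/
import Mathlib

section
/- Let E be a finite-dimensional real normed vector space, let A : E → E be an invertible linear map with operator norm ‖A^{−1}‖ < 1, let f : 𝕋^d → 𝕋^d be continuous, and let R : 𝕋^d → E be continuous. Then there is a unique continuous map h : 𝕋^d → E satisfying A(h(x)) − h(f(x)) = R(x) for all x ∈ 𝕋^d, and it is given by the uniformly convergent series h = Σ_{k=0}^∞ A^{−(k+1)}(R∘f^k). -/
/-!
Since `‖A⁻¹‖ < 1`, the equation `A h - h ∘ f = R`, rewritten as the fixed-point equation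
`h = A⁻¹ (R + h ∘ f)`, is solved by iterating: the `k`-th term of the series is bounded by
`‖A⁻¹‖ ^ (k + 1) * sup ‖R‖`, so the Weierstrass M-test gives uniform convergence, hence a continuous
sum, and shifting the series by one index shows that it solves the equation. The difference `g` of
two bounded solutions satisfies `g = A⁻¹ ∘ g ∘ f`, so `sup ‖g‖ ≤ ‖A⁻¹‖ ^ n * sup ‖g‖` for all `n`,
forcing `g = 0`; on the compact torus every continuous map is bounded.
-/

noncomputable section

/-- The `d`-dimensional torus `𝕋^d = ℝ^d/ℤ^d`. -/
abbrev Torus (d : ℕ) := Fin d → AddCircle (1 : ℝ)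

open Filter Topology

namespace CohomologicalEquation

variable {𝕜 E X : Type*} [NontriviallyNormedField 𝕜] [NormedAddCommGroup E] [NormedSpace 𝕜 E]
  {B : E →L[𝕜] E} {f : X → X} {R : X → E} {C : ℝ}

def twistedBirkhoffSeries (B : E →L[𝕜] E) (f : X → X) (R : X → E) (x : X) : E :=
  ∑' k : ℕ, (B ^ (k + 1)) (R (f^[k] x))

lemma norm_twistedBirkhoffTerm_le (hR : ∀ x, ‖R x‖ ≤ C) (k : ℕ) (x : X) :
    ‖(B ^ (k + 1)) (R (f^[k] x))‖ ≤ ‖B‖ ^ (k + 1) * C :=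
  calc ‖(B ^ (k + 1)) (R (f^[k] x))‖ ≤ ‖B ^ (k + 1)‖ * ‖R (f^[k] x)‖ := (B ^ (k + 1)).le_opNorm _
    _ ≤ ‖B‖ ^ (k + 1) * C :=
      mul_le_mul (norm_pow_le' B k.succ_pos) (hR _) (norm_nonneg _) (by positivity)

lemma summable_pow_succ_mul (hB : ‖B‖ < 1) : Summable fun k : ℕ => ‖B‖ ^ (k + 1) * C := by
  simpa only [pow_succ, mul_assoc] using
    (summable_geometric_of_lt_one (norm_nonneg B) hB).mul_right (‖B‖ * C)

lemma summable_twistedBirkhoffTerm [CompleteSpace E] (hB : ‖B‖ < 1) (hR : ∀ x, ‖R x‖ ≤ C)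
    (x : X) :
    Summable fun k : ℕ => (B ^ (k + 1)) (R (f^[k] x)) :=
  .of_norm_bounded (summable_pow_succ_mul hB) (norm_twistedBirkhoffTerm_le hR · x)

lemma tendstoUniformly_twistedBirkhoffSeries [CompleteSpace E] (hB : ‖B‖ < 1)
    (hR : ∀ x, ‖R x‖ ≤ C) :
    TendstoUniformly (fun (N : ℕ) (x : X) => ∑ k ∈ Finset.range N, (B ^ (k + 1)) (R (f^[k] x)))
      (twistedBirkhoffSeries B f R) atTop :=
  tendstoUniformly_tsum_nat (summable_pow_succ_mul hB) (norm_twistedBirkhoffTerm_le hR)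

lemma continuous_twistedBirkhoffSeries [CompleteSpace E] [TopologicalSpace X] (hB : ‖B‖ < 1)
    (hR : ∀ x, ‖R x‖ ≤ C) (hf : Continuous f) (hRc : Continuous R) :
    Continuous (twistedBirkhoffSeries B f R) :=
  (tendstoUniformly_twistedBirkhoffSeries hB hR).continuous <| .of_forall fun _ =>
    continuous_finsetSum _ fun k _ => (B ^ (k + 1)).continuous.comp (hRc.comp (hf.iterate k))

lemma twistedBirkhoffSeries_eq [CompleteSpace E] (hB : ‖B‖ < 1) (hR : ∀ x, ‖R x‖ ≤ C) (x : X) :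
    twistedBirkhoffSeries B f R x = B (R x + twistedBirkhoffSeries B f R (f x)) := by
  rw [map_add, twistedBirkhoffSeries, twistedBirkhoffSeries,
    (summable_twistedBirkhoffTerm hB hR x).tsum_eq_zero_add,
    B.map_tsum (summable_twistedBirkhoffTerm hB hR (f x))]
  simp only [zero_add, pow_one, Function.iterate_zero_apply, pow_succ' B (_ + 1),
    mul_apply_eq_comp, Function.iterate_succ_apply]

lemma apply_twistedBirkhoffSeries_sub_comp [CompleteSpace E] (A : E ≃L[𝕜] E)
    (hA : ‖(A.symm : E →L[𝕜] E)‖ < 1) (hR : ∀ x, ‖R x‖ ≤ C) (x : X) :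
    A (twistedBirkhoffSeries (A.symm : E →L[𝕜] E) f R x) -
      twistedBirkhoffSeries (A.symm : E →L[𝕜] E) f R (f x) = R x := by
  rw [twistedBirkhoffSeries_eq hA hR x, ContinuousLinearEquiv.coe_coe, A.apply_symm_apply,
    add_sub_cancel_right]

lemma eq_zero_of_eq_apply_comp (hB : ‖B‖ < 1) {g : X → E} (hg : ∀ x, g x = B (g (f x)))
    (hC : ∀ x, ‖g x‖ ≤ C) : g = 0 := by
  have hpow : ∀ n x, ‖g x‖ ≤ ‖B‖ ^ n * C := by
    intro n
    induction n with
    | zero => simpa using hC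
    | succ n ih =>
      intro x
      calc ‖g x‖ = ‖B (g (f x))‖ := by rw [← hg]
        _ ≤ ‖B‖ * (‖B‖ ^ n * C) := B.le_opNorm_of_le (ih _)
        _ = ‖B‖ ^ (n + 1) * C := by ring
  have hlim : Tendsto (fun n : ℕ => ‖B‖ ^ n * C) atTop (𝓝 0) := by
    simpa using (tendsto_pow_atTop_nhds_zero_of_lt_one (norm_nonneg B) hB).mul_const C
  funext x
  exact norm_le_zero_iff.mp (ge_of_tendsto' hlim (hpow · x))

lemma eq_of_apply_sub_comp_eq (A : E ≃L[𝕜] E) (hA : ‖(A.symm : E →L[𝕜] E)‖ < 1)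
    {h₁ h₂ : X → E} (hC : ∀ x, ‖h₁ x - h₂ x‖ ≤ C)
    (heq : ∀ x, A (h₁ x) - h₁ (f x) = A (h₂ x) - h₂ (f x)) : h₁ = h₂ := by
  have hdiff : ∀ x, (h₁ - h₂) x = (A.symm : E →L[𝕜] E) ((h₁ - h₂) (f x)) := fun x => by
    rw [ContinuousLinearEquiv.coe_coe, ContinuousLinearEquiv.eq_symm_apply, Pi.sub_apply,
      Pi.sub_apply, map_sub, sub_eq_sub_iff_sub_eq_sub.mp (heq x)]
  exact sub_eq_zero.mp (eq_zero_of_eq_apply_comp hA hdiff hC)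

end CohomologicalEquation

open CohomologicalEquation

/-- Let `E` be a finite-dimensional real normed vector space, let
`A : E → E` be an invertible linear map with `‖A⁻¹‖ < 1`, let `f : 𝕋^d → 𝕋^d` be continuous
and `R : 𝕋^d → E` continuous. Then there is a unique continuous `h : 𝕋^d → E` with
`A(h(x)) - h(f(x)) = R(x)` for all `x`, and it is given by the uniformly convergent series
`h = Σ_{k=0}^∞ A^{-(k+1)} (R ∘ f^k)`. -/
theorem statement_8 {d : ℕ} {E : Type*} [NormedAddCommGroup E] [NormedSpace ℝ E]
    [FiniteDimensional ℝ E]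
    (A : E ≃L[ℝ] E) (hA : ‖A.symm.toContinuousLinearMap‖ < 1)
    (f : Torus d → Torus d) (hf : Continuous f)
    (R : Torus d → E) (hR : Continuous R) :
    ∃ h : Torus d → E, Continuous h ∧ (∀ x, A (h x) - h (f x) = R x) ∧
      TendstoUniformly
        (fun (N : ℕ) (x : Torus d) =>
          ∑ k ∈ Finset.range N, (A.symm.toContinuousLinearMap ^ (k + 1)) (R (f^[k] x)))
        h Filter.atTop ∧
      ∀ h' : Torus d → E, Continuous h' → (∀ x, A (h' x) - h' (f x) = R x) → h' = h := by
  have bound : ∀ g : Torus d → E, Continuous g → ∃ C, ∀ x, ‖g x‖ ≤ C := fun g hg => by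
    simpa using isCompact_univ.exists_bound_of_continuousOn hg.continuousOn
  obtain ⟨C, hC⟩ := bound R hR
  have hcont := continuous_twistedBirkhoffSeries hA hC hf hR
  refine ⟨_, hcont, apply_twistedBirkhoffSeries_sub_comp A hA hC,
    tendstoUniformly_twistedBirkhoffSeries hA hC, fun h' hh' heq' => ?_⟩
  obtain ⟨M, hM⟩ := bound _ (hh'.sub hcont)
  exact eq_of_apply_sub_comp_eq A hA hM fun x => by
    rw [heq', apply_twistedBirkhoffSeries_sub_comp A hA hC]

end
end

section
/- (Katznelson's Lemma) Let A be a d×d integer matrix and suppose ℝ^d = V₁ ⊕ V₂ where V₁ and V₂ are A-invariant subspaces such that the restrictions A|_{V₁} and A|_{V₂} have no common complex eigenvalue. If V₁ ∩ ℤ^d = {0}, then there exists a constant K > 0 such that dist(n, V₁) ≥ K‖n‖^{−d} for every nonzero n ∈ ℤ^d. -/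
noncomputable section

/-- `ℝ^d`. -/
abbrev Ed (d : ℕ) := Fin d → ℝ

/-- The integer vector `n` viewed as a point of `ℝ^d`. -/
def intVec {d : ℕ} (n : Fin d → ℤ) : Ed d := fun i => (n i : ℝ)

/-- The Euclidean norm on `ℝ^d`. -/
def eucNorm {d : ℕ} (x : Ed d) : ℝ := Real.sqrt (∑ i, x i ^ 2)

/-- The Euclidean distance from a point of `ℝ^d` to a subspace. -/
def eucDist {d : ℕ} (x : Ed d) (V : Submodule ℝ (Ed d)) : ℝ :=
  sInf ((fun w => eucNorm (x - w)) '' (V : Set (Ed d)))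

/-!
Bézout for the coprime characteristic polynomials `p₁, p₂` of `A` on `V₁, V₂` gives a polynomial
`q` (namely `a p₁` from `a p₁ + b p₂ = 1`) with `q(A) = 0` on `V₁` and `q(A) = id` on `V₂`.
Hence `‖q(A) n‖ ≤ C dist(n, V₁)`, and `q(A) n ≠ 0` for a nonzero integer vector `n`, as `n ∉ V₁`.

Let `g` be the monic generator of the annihilator `{p | p(A) n = 0}`. Then `q(A) n = r(A) n`
with `r = q mod g ≠ 0`, a combination of the linearly independent integer vectors `Aʲ n`,
`j < deg g`, all of size `O(‖n‖)`. Completing them by standard basis vectors to an integer basis,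
Cramer's rule bounds the leading coefficient: `|lc r| ≤ C' ‖n‖ᵈ ‖q(A) n‖`. As `g` divides the
characteristic polynomial of `A`, only finitely many `r` occur, so `|lc r|` is bounded below.
-/

open Set Module Polynomial
open scoped Nat

namespace Module.End
variable {R M : Type*} [CommRing R] [AddCommGroup M] [Module R M]

theorem aeval_restrict_apply (f : Module.End R M) {p : Submodule R M} (h : ∀ x ∈ p, f x ∈ p)
    (P : R[X]) (x : p) : (aeval (f.restrict h) P x : M) = aeval f P x := by
  induction P using Polynomial.induction_on' with
  | add P Q hP hQ => simp [hP, hQ]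
  | monomial k a => simp [aeval_monomial, pow_restrict k h]

theorem aeval_charpoly_restrict_apply {f : Module.End R M} {p : Submodule R M}
    [Module.Free R p] [Module.Finite R p] (h : ∀ x ∈ p, f x ∈ p) {x : M} (hx : x ∈ p) :
    aeval f (f.restrict h).charpoly x = 0 := by
  rw [← aeval_restrict_apply f h _ ⟨x, hx⟩, LinearMap.aeval_self_charpoly]
  rfl

theorem exists_aeval_apply_eq_zero_and_eq_self (f : Module.End R M) {p₁ p₂ : R[X]}
    (hcop : IsCoprime p₁ p₂) {V₁ V₂ : Submodule R M} (h₁ : ∀ y ∈ V₁, aeval f p₁ y = 0)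
    (h₂ : ∀ y ∈ V₂, aeval f p₂ y = 0) :
    ∃ q : R[X], (∀ y ∈ V₁, aeval f q y = 0) ∧ ∀ y ∈ V₂, aeval f q y = y := by
  obtain ⟨a, b, hab⟩ := hcop
  refine ⟨a * p₁, fun y hy => by simp [h₁ y hy], fun y hy => ?_⟩
  rw [eq_sub_of_add_eq hab]
  simp [h₂ y hy]

variable {K V : Type*} [Field K] [AddCommGroup V] [Module K V]

theorem exists_monic_forall_aeval_apply_eq_zero_iff_dvd [FiniteDimensional K V]
    (f : Module.End K V) (x : V) : ∃ g : K[X], g.Monic ∧ ∀ p : K[X], aeval f p x = 0 ↔ g ∣ p := by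
  classical
  let I : Ideal K[X] :=
    { carrier := {p | aeval f p x = 0}
      add_mem' := fun {p q} hp hq => by simp_all
      zero_mem' := by simp
      smul_mem' := fun c p hp => by simp_all }
  have hI : I ≠ ⊥ := fun h => (LinearMap.charpoly_monic f).ne_zero <| by
    rw [← Submodule.mem_bot K[X], ← h]
    exact congrArg (· x) (LinearMap.aeval_self_charpoly f)
  have hgen : Submodule.IsPrincipal.generator I ≠ 0 := by
    rwa [Ne, ← Submodule.IsPrincipal.eq_bot_iff_generator_eq_zero]
  exact ⟨normalize _, monic_normalize hgen, fun p =>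
    (Submodule.IsPrincipal.mem_iff_generator_dvd I).trans normalize_dvd_iff.symm⟩

theorem linearIndependent_pow_apply {f : Module.End K V} {x : V} {g : K[X]}
    (hg : ∀ p : K[X], aeval f p x = 0 → g ∣ p) :
    LinearIndependent K fun j : Fin g.natDegree => (f ^ (j : ℕ)) x := by
  rw [Fintype.linearIndependent_iff]
  intro c hc j
  have hg0 : g ≠ 0 := by rintro rfl; exact j.elim0
  let p : K[X] := ∑ k : Fin g.natDegree, C (c k) * X ^ (k : ℕ)
  have hp : p = 0 := by
    refine eq_zero_of_dvd_of_degree_lt (hg p ?_) ?_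
    · simpa [p, map_sum] using hc
    · exact degree_eq_natDegree hg0 ▸ degree_sum_fin_lt c
  simpa [p, finsetSum_coeff, coeff_C_mul_X_pow, Fin.val_inj] using congrArg (coeff · j) hp

end Module.End

open Filter Topology in
theorem Set.Finite.exists_pos_forall_le {α : Type*} {s : Set α} (hs : s.Finite) {u : α → ℝ}
    (hu : ∀ a ∈ s, 0 < u a) : ∃ K > 0, ∀ a ∈ s, K ≤ u a := by
  have h : ∀ᶠ K in 𝓝[>] (0 : ℝ), 0 < K ∧ ∀ a ∈ s, K ≤ u a :=
    eventually_mem_nhdsWithin.and <| (eventually_all_finite hs).2 fun a ha =>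
      nhdsWithin_le_nhds (eventually_le_nhds (hu a ha))
  exact h.exists

theorem LinearMap.exists_norm_pow_apply_le {E : Type*} [NormedAddCommGroup E] [NormedSpace ℝ E]
    [FiniteDimensional ℝ E] (f : E →ₗ[ℝ] E) :
    ∃ C, 1 ≤ C ∧ ∀ (j : ℕ) x, ‖(f ^ j) x‖ ≤ C ^ j * ‖x‖ := by
  obtain ⟨C, -, hC⟩ := (LinearMap.toContinuousLinearMap f).bound
  refine ⟨max C 1, le_max_right _ _, fun j => ?_⟩
  induction j with
  | zero => simp
  | succ j ih =>
    intro x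
    calc ‖(f ^ (j + 1)) x‖ = ‖(f ^ j) (f x)‖ := by rw [pow_succ, Module.End.mul_apply]
      _ ≤ max C 1 ^ j * (max C 1 * ‖x‖) :=
        (ih _).trans <| by gcongr; exact (hC x).trans (by gcongr; exact le_max_left _ _)
      _ = max C 1 ^ (j + 1) * ‖x‖ := by ring

section IntegerVectors

variable {d : ℕ}

theorem intVec_eq_zero_iff {n : Fin d → ℤ} : intVec n = 0 ↔ n = 0 := by
  simp [funext_iff, intVec]

theorem one_le_norm_of_mem_range_intVec {x : Ed d} (hx : x ∈ range intVec) (hx0 : x ≠ 0) :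
    1 ≤ ‖x‖ := by
  obtain ⟨n, rfl⟩ := hx
  obtain ⟨i, hi⟩ : ∃ i, n i ≠ 0 := by
    by_contra! h
    exact hx0 (intVec_eq_zero_iff.2 (funext h))
  calc (1 : ℝ) ≤ ‖(n i : ℝ)‖ := by
        rw [Real.norm_eq_abs, ← Int.cast_abs]; exact_mod_cast Int.one_le_abs hi
    _ ≤ ‖intVec n‖ := norm_le_pi_norm (intVec n) i

theorem single_mem_range_intVec (i : Fin d) : (Pi.single i 1 : Ed d) ∈ range intVec :=
  ⟨Pi.single i 1, by ext j; simp [intVec, Pi.single_apply]⟩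

theorem mapsTo_mulVecLin_range_intVec (A : Matrix (Fin d) (Fin d) ℤ) :
    MapsTo (A.map ((↑) : ℤ → ℝ)).mulVecLin (range intVec) (range intVec) := by
  rintro _ ⟨n, rfl⟩
  exact ⟨A.mulVec n, by ext i; simp [intVec, Matrix.mulVec, dotProduct]⟩

theorem norm_le_eucNorm (x : Ed d) : ‖x‖ ≤ eucNorm x := by
  refine (pi_norm_le_iff_of_nonneg (Real.sqrt_nonneg _)).2 fun i => ?_
  rw [Real.norm_eq_abs, ← Real.sqrt_sq_eq_abs]
  exact Real.sqrt_le_sqrt <|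
    Finset.single_le_sum (f := fun i => x i ^ 2) (fun j _ => sq_nonneg _) (Finset.mem_univ i)

theorem one_le_abs_det_of_forall_mem_range_intVec {v : Fin d → Ed d}
    (hv : ∀ i, v i ∈ range intVec) (h0 : (Matrix.of v).det ≠ 0) : 1 ≤ |(Matrix.of v).det| := by
  choose z hz using hv
  have hdet : (Matrix.of v).det = ((Matrix.of z).det : ℝ) := by
    rw [show ((Matrix.of z).det : ℝ) = Int.castRingHom ℝ (Matrix.of z).det from rfl,
      RingHom.map_det]
    congr 1
    ext i j
    simp [← hz, intVec]
  rw [hdet] at h0 ⊢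
  exact_mod_cast Int.one_le_abs (by exact_mod_cast h0)

theorem abs_apply_le_of_forall_abs_apply_single_le (L : Ed d →ₗ[ℝ] ℝ) {C : ℝ}
    (hL : ∀ i, |L (Pi.single i 1)| ≤ C) (u : Ed d) : |L u| ≤ d * C * ‖u‖ := by
  conv_lhs => rw [pi_eq_sum_univ' u, map_sum]
  calc |∑ i, L (u i • Pi.single i 1)| ≤ ∑ i, |L (u i • Pi.single i 1)| :=
        Finset.abs_sum_le_sum_abs _ _
    _ = ∑ i, |u i| * |L (Pi.single i 1)| := by simp [abs_mul]
    _ ≤ ∑ _i : Fin d, ‖u‖ * C :=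
        Finset.sum_le_sum fun i _ => mul_le_mul (norm_le_pi_norm u i) (hL i) (abs_nonneg _)
          (norm_nonneg _)
    _ = d * C * ‖u‖ := by
        simp only [Finset.sum_const, Finset.card_univ, Fintype.card_fin, nsmul_eq_mul]; ring

theorem Module.Basis.abs_repr_le_of_forall_mem_range_intVec {ι : Type*} [Finite ι]
    (B : Module.Basis ι ℝ (Ed d)) (hint : ∀ i, B i ∈ range intVec) {β : ℝ} (hβ : 1 ≤ β)
    (hB : ∀ i, ‖B i‖ ≤ β) (u : Ed d) (i : ι) : |B.repr u i| ≤ (d + 1)! * β ^ d * ‖u‖ := by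
  classical
  let e : ι ≃ Fin d :=
    Finite.equivFinOfCardEq (by simpa using (Module.finrank_eq_nat_card_basis B).symm)
  set B' := B.reindex e
  have hrepr : B.repr u i = B'.repr u (e i) := by simp [B']
  have hdet : (Pi.basisFun ℝ (Fin d)).det B' = (Matrix.of B').det := Pi.basisFun_det_apply _
  -- Cramer's rule
  have hcramer : (Matrix.of B').det * B'.repr u (e i) =
      (Pi.basisFun ℝ (Fin d)).det.toMultilinearMap.toLinearMap B' (e i) u := by
    have := congrArg (· u) ((Pi.basisFun ℝ (Fin d)).det_smul_mk_coord_eq_det_update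
      B'.linearIndependent B'.span_eq.ge (e i))
    rwa [Basis.eq_of_apply_eq (b₂ := B') (Basis.mk_apply _ _), LinearMap.smul_apply,
      Basis.coord_apply, smul_eq_mul, hdet] at this
  have hone : 1 ≤ |(Matrix.of B').det| :=
    one_le_abs_det_of_forall_mem_range_intVec (fun k => by simpa [B'] using hint _)
      (hdet ▸ ((Pi.basisFun ℝ (Fin d)).isUnit_det B').ne_zero)
  have hminor : ∀ k, |(Pi.basisFun ℝ (Fin d)).det.toMultilinearMap.toLinearMap B' (e i)
      (Pi.single k 1)| ≤ d ! * β ^ d := by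
    intro k
    have hentry : ∀ a b, |Matrix.of (Function.update B' (e i) (Pi.single k 1)) a b| ≤ β := by
      intro a b
      rcases eq_or_ne a (e i) with rfl | ha
      · rw [Matrix.of_apply, Function.update_self, Pi.single_apply]
        split_ifs <;> simp [hβ, zero_le_one.trans hβ]
      · rw [Matrix.of_apply, Function.update_of_ne ha]
        exact (norm_le_pi_norm (B' a) b).trans (by simpa [B'] using hB _)
    rw [MultilinearMap.toLinearMap_apply, AlternatingMap.coe_multilinearMap,
      Pi.basisFun_det_apply]
    simpa using Matrix.det_le (abv := AbsoluteValue.abs) hentry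
  calc |B.repr u i| ≤ |(Matrix.of B').det| * |B'.repr u (e i)| := by
        rw [hrepr]; exact le_mul_of_one_le_left (abs_nonneg _) hone
    _ ≤ d * (d ! * β ^ d) * ‖u‖ := by
        rw [← abs_mul, hcramer]; exact abs_apply_le_of_forall_abs_apply_single_le _ hminor u
    _ ≤ (d + 1)! * β ^ d * ‖u‖ := by
        rw [← mul_assoc]
        gcongr
        exact_mod_cast (Nat.mul_le_mul_right _ d.le_succ).trans_eq (Nat.factorial_succ d).symm

theorem abs_le_of_linearIndependent_of_forall_mem_range_intVec {m : ℕ} {w : Fin m → Ed d}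
    (hw : LinearIndependent ℝ w) (hint : ∀ j, w j ∈ range intVec) {β : ℝ} (hβ : 1 ≤ β)
    (hwβ : ∀ j, ‖w j‖ ≤ β) (c : Fin m → ℝ) (j : Fin m) :
    |c j| ≤ (d + 1)! * β ^ d * ‖∑ k, c k • w k‖ := by
  classical
  -- extend `w` by standard basis vectors: the result is a basis of integer vectors of norm `≤ β`
  set t := range w ∪ range fun i : Fin d => (Pi.single i 1 : Ed d)
  have hspan : ⊤ ≤ Submodule.span ℝ t := by
    rw [← (Pi.basisFun ℝ (Fin d)).span_eq]
    exact Submodule.span_mono fun _ ⟨i, hi⟩ => Or.inr ⟨i, by simpa using hi⟩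
  have hs : LinearIndepOn ℝ id (range w) := (linearIndepOn_id_range_iff hw.injective).2 hw
  have hst : range w ⊆ t := subset_union_left
  let B := Basis.extendLe hs hst hspan
  have := Module.Finite.finite_basis B
  let ι : Fin m → hs.extend hst := fun k =>
    ⟨w k, hs.subset_extend hst (mem_range_self k)⟩
  have hrepr : B.repr (∑ k, c k • w k) (ι j) = c j := by
    have hι : Function.Injective ι := fun k l h => hw.injective (congrArg Subtype.val h)
    have hBι : ∀ k, B (ι k) = w k := fun k => Basis.extendLe_apply_self hs hst hspan (ι k)
    simp [← hBι, Finsupp.single_apply, hι.eq_iff]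
  rw [← hrepr]
  refine B.abs_repr_le_of_forall_mem_range_intVec (fun b => ?_) hβ (fun b => ?_) _ _ <;>
    rcases hs.extend_subset hst b.2 with ⟨k, hk⟩ | ⟨i, hi⟩
  · simpa [B, ← hk] using hint k
  · simpa [B, ← hi] using single_mem_range_intVec i
  · simpa [B, ← hk] using hwβ k
  · simpa [B, ← hi, Pi.norm_single] using hβ

end IntegerVectors

theorem abs_leadingCoeff_le_of_natDegree_lt {d : ℕ} {f : Module.End ℝ (Ed d)}
    (hf : MapsTo f (range intVec) (range intVec)) {C : ℝ} (hC : 1 ≤ C)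
    (hfC : ∀ (j : ℕ) x, ‖(f ^ j) x‖ ≤ C ^ j * ‖x‖) {x : Ed d} (hx : x ∈ range intVec)
    (hx1 : 1 ≤ ‖x‖) {g r : ℝ[X]} (hg : ∀ p : ℝ[X], aeval f p x = 0 → g ∣ p)
    (hr : r.natDegree < g.natDegree) :
    |r.leadingCoeff| ≤ (d + 1)! * (C ^ d * ‖x‖) ^ d * ‖aeval f r x‖ := by
  have hw := Module.End.linearIndependent_pow_apply hg
  have hgd : g.natDegree ≤ d := by simpa using hw.fintype_card_le_finrank
  have hsum : aeval f r x = ∑ j : Fin g.natDegree, r.coeff j • (f ^ (j : ℕ)) x := by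
    rw [aeval_eq_sum_range' hr, ← Fin.sum_univ_eq_sum_range, LinearMap.sum_apply]
    rfl
  rw [hsum]
  refine abs_le_of_linearIndependent_of_forall_mem_range_intVec hw
    (fun j => by rw [Module.End.pow_apply]; exact (hf.iterate j) hx) ?_ (fun j => ?_)
    (fun j => r.coeff j) ⟨r.natDegree, hr⟩
  · exact one_le_mul_of_one_le_of_one_le (one_le_pow₀ hC) hx1
  · exact (hfC j x).trans (by gcongr; exact j.isLt.le.trans hgd)

theorem exists_pos_le_norm_pow_mul_norm_aeval {d : ℕ} {f : Module.End ℝ (Ed d)}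
    (hf : MapsTo f (range intVec) (range intVec)) (q : ℝ[X]) :
    ∃ K > 0, ∀ x ∈ range intVec, aeval f q x ≠ 0 → K ≤ ‖x‖ ^ d * ‖aeval f q x‖ := by
  have hG : {g : ℝ[X] | g.Monic ∧ g ∣ f.charpoly ∧ q %ₘ g ≠ 0}.Finite := by
    have := fintypeSubtypeMonicDvd f.charpoly (LinearMap.charpoly_monic f).ne_zero
    exact (Set.finite_coe_iff (s := {g : ℝ[X] | g.Monic ∧ g ∣ f.charpoly}).1
      (Finite.of_fintype {g : ℝ[X] // g.Monic ∧ g ∣ f.charpoly})).subset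
      fun g hg => ⟨hg.1, hg.2.1⟩
  obtain ⟨K₀, hK₀, hK₀le⟩ := hG.exists_pos_forall_le (u := fun g => |(q %ₘ g).leadingCoeff|)
    fun g hg => abs_pos.2 (leadingCoeff_ne_zero.2 hg.2.2)
  obtain ⟨C, hC, hfC⟩ := f.exists_norm_pow_apply_le
  refine ⟨K₀ / ((d + 1)! * C ^ (d * d)), by positivity, fun x hx hqx => ?_⟩
  obtain ⟨g, hgm, hg⟩ := Module.End.exists_monic_forall_aeval_apply_eq_zero_iff_dvd f x
  have hrx : aeval f (q %ₘ g) x = aeval f q x := by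
    rw [modByMonic_eq_sub_mul_div q g, map_sub, LinearMap.sub_apply,
      (hg _).2 (dvd_mul_right g _), sub_zero]
  have hr0 : q %ₘ g ≠ 0 := fun h => hqx (by rw [← hrx, h, map_zero, LinearMap.zero_apply])
  have hg1 : g ≠ 1 := by rintro rfl; exact hr0 (modByMonic_one q)
  have hgP : g ∣ f.charpoly := (hg _).1 (by rw [LinearMap.aeval_self_charpoly]; rfl)
  have hx0 : x ≠ 0 := by rintro rfl; exact hqx (map_zero _)
  have key := abs_leadingCoeff_le_of_natDegree_lt hf hC hfC hx
    (one_le_norm_of_mem_range_intVec hx hx0) (fun p => (hg p).1) (natDegree_modByMonic_lt q hgm hg1)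
  rw [hrx, mul_pow, ← pow_mul] at key
  rw [div_le_iff₀ (by positivity)]
  calc K₀ ≤ |(q %ₘ g).leadingCoeff| := hK₀le g ⟨hgm, hgP, hr0⟩
    _ ≤ _ := key
    _ = _ := by ring

theorem exists_pos_le_norm_pow_mul_norm_sub {d : ℕ} {f : Module.End ℝ (Ed d)}
    (hf : MapsTo f (range intVec) (range intVec)) {V₁ V₂ : Submodule ℝ (Ed d)}
    (hcompl : IsCompl V₁ V₂) {q : ℝ[X]} (hq₁ : ∀ y ∈ V₁, aeval f q y = 0)
    (hq₂ : ∀ y ∈ V₂, aeval f q y = y) (hint : ∀ n : Fin d → ℤ, intVec n ∈ V₁ → n = 0) :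
    ∃ K > 0, ∀ n : Fin d → ℤ, n ≠ 0 → ∀ w ∈ V₁, K ≤ ‖intVec n‖ ^ d * ‖intVec n - w‖ := by
  obtain ⟨K₀, hK₀, hK₀le⟩ := exists_pos_le_norm_pow_mul_norm_aeval hf q
  obtain ⟨C, hC, hqC⟩ := (LinearMap.toContinuousLinearMap (aeval f q)).bound
  refine ⟨K₀ / C, by positivity, fun n hn w hw => ?_⟩
  have hqn : aeval f q (intVec n) ≠ 0 := by
    obtain ⟨y₁, hy₁, y₂, hy₂, hy⟩ := Submodule.mem_sup.1
      (hcompl.sup_eq_top ▸ Submodule.mem_top : intVec n ∈ V₁ ⊔ V₂)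
    rw [← hy, map_add, hq₁ y₁ hy₁, hq₂ y₂ hy₂, zero_add]
    rintro rfl
    exact hn (hint n (by rw [← hy, add_zero]; exact hy₁))
  have hqw : aeval f q (intVec n) = aeval f q (intVec n - w) := by
    rw [map_sub, hq₁ w hw, sub_zero]
  rw [div_le_iff₀ hC]
  calc K₀ ≤ ‖intVec n‖ ^ d * ‖aeval f q (intVec n)‖ := hK₀le _ (mem_range_self n) hqn
    _ ≤ ‖intVec n‖ ^ d * (C * ‖intVec n - w‖) := by rw [hqw]; gcongr; exact hqC _
    _ = _ := by ring

theorem le_eucDist_of_forall_le {d k : ℕ} {x : Ed d} {V : Submodule ℝ (Ed d)} {K : ℝ}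
    (hK : 0 ≤ K) (hx : x ≠ 0) (h : ∀ w ∈ V, K ≤ ‖x‖ ^ k * ‖x - w‖) :
    K * eucNorm x ^ (-(k : ℝ)) ≤ eucDist x V := by
  have hx' : 0 < ‖x‖ := norm_pos_iff.2 hx
  have hxe : 0 ≤ eucNorm x := Real.sqrt_nonneg _
  rw [Real.rpow_neg hxe, Real.rpow_natCast, eucDist]
  refine le_csInf ⟨_, 0, V.zero_mem, rfl⟩ ?_
  rintro _ ⟨w, hw, rfl⟩
  calc K * (eucNorm x ^ k)⁻¹ ≤ K * (‖x‖ ^ k)⁻¹ := by gcongr; exact norm_le_eucNorm x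
    _ ≤ ‖x - w‖ := by rw [← div_eq_mul_inv, div_le_iff₀ (by positivity), mul_comm]; exact h w hw
    _ ≤ eucNorm (x - w) := norm_le_eucNorm _

/-- **Katznelson's Lemma.** Let `A` be a `d×d` integer matrix and suppose
`ℝ^d = V₁ ⊕ V₂` with `V₁, V₂` invariant under `A` and such that the restrictions `A|_{V₁}`
and `A|_{V₂}` have no common complex eigenvalue. If `V₁ ∩ ℤ^d = {0}`, then there exists
`K > 0` with `dist(n, V₁) ≥ K ‖n‖^{-d}` for every nonzero `n ∈ ℤ^d`. -/
theorem statement_11 {d : ℕ} (A : Matrix (Fin d) (Fin d) ℤ)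
    (V₁ V₂ : Submodule ℝ (Ed d)) (hcompl : IsCompl V₁ V₂)
    (h₁ : ∀ x ∈ V₁, (A.map ((↑) : ℤ → ℝ)).mulVecLin x ∈ V₁)
    (h₂ : ∀ x ∈ V₂, (A.map ((↑) : ℤ → ℝ)).mulVecLin x ∈ V₂)
    (hsep : ¬ ∃ z : ℂ,
      Polynomial.aeval z (LinearMap.charpoly (((A.map ((↑) : ℤ → ℝ)).mulVecLin).restrict h₁)) = 0 ∧
      Polynomial.aeval z (LinearMap.charpoly (((A.map ((↑) : ℤ → ℝ)).mulVecLin).restrict h₂)) = 0)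
    (hint : ∀ n : Fin d → ℤ, intVec n ∈ V₁ → n = 0) :
    ∃ K : ℝ, 0 < K ∧ ∀ n : Fin d → ℤ, n ≠ 0 →
      K * eucNorm (intVec n) ^ (-(d : ℝ)) ≤ eucDist (intVec n) V₁ := by
  set M := (A.map ((↑) : ℤ → ℝ)).mulVecLin
  have hcop : IsCoprime (M.restrict h₁).charpoly (M.restrict h₂).charpoly :=
    (isCoprime_iff_aeval_ne_zero_of_isAlgClosed ℝ ℂ _ _).2 fun z =>
      not_and_or.1 fun h => hsep ⟨z, h⟩
  obtain ⟨q, hq₁, hq₂⟩ := Module.End.exists_aeval_apply_eq_zero_and_eq_self M hcop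
    (fun _ => Module.End.aeval_charpoly_restrict_apply h₁)
    (fun _ => Module.End.aeval_charpoly_restrict_apply h₂)
  obtain ⟨K, hK, hKle⟩ := exists_pos_le_norm_pow_mul_norm_sub
    (mapsTo_mulVecLin_range_intVec A) hcompl hq₁ hq₂ hint
  exact ⟨K, hK, fun n hn =>
    le_eucDist_of_forall_le hK.le (mt intVec_eq_zero_iff.1 hn) (hKle n hn)⟩

end
end

section
/- Let V ⊆ ℝ^d be a subspace with the Diophantine property, with orthonormal basis {v_1,…,v_r}. Suppose 0 < β < 1 and k ∈ ℕ satisfy d/2^k < β/2. Then there exists a constant K (depending on V and k) such that for every ψ ∈ H^β(𝕋^d) there exist θ_1,…,θ_r ∈ H^{β/2}(𝕋^d) with zero mean ((θ_j)̂_0 = 0), ‖θ_j‖_{H^{β/2}} ≤ K‖ψ‖_{H^β} for each j, and ψ = ψ̂_0 + Σ_{j=1}^r |∂_{v_j}|^{1/2^k} θ_j. -/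
open MeasureTheory
noncomputable section

/-- The standard fundamental domain `[0,1)^d` of the torus `𝕋^d = ℝ^d/ℤ^d`. -/
def unitCube (d : ℕ) : Set (Ed d) := {x | ∀ i, 0 ≤ x i ∧ x i < 1}

/-- A `ℤ^d`-periodic function on `ℝ^d`, i.e. a function on the torus `𝕋^d`. -/
def IsPeriodicC {d : ℕ} (f : Ed d → ℂ) : Prop := ∀ x n, f (x + intVec n) = f x

/-- The `L²(𝕋^d)` pairing `⟨ω, ψ⟩ = ∫ ω ψ̄` (with respect to Lebesgue measure,
computed on the fundamental domain). -/
def pairingC {d : ℕ} (ω ψ : Ed d → ℂ) : ℂ :=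
  ∫ x in unitCube d, ω x * (starRingEnd ℂ) (ψ x)

/-- The Fourier coefficient `ω̂_n = ∫_{𝕋^d} ω(x) e^{-2πi n·x} dx`. -/
def fourierCoeffT {d : ℕ} (ω : Ed d → ℂ) (n : Fin d → ℤ) : ℂ :=
  ∫ x in unitCube d,
    ω x * Complex.exp (-(2 * Real.pi * Complex.I) * ∑ i, (n i : ℂ) * (x i : ℂ))

/-- The square of the fractional Sobolev norm
`‖ω‖_{H^β}² = Σ_n (1+‖n‖²)^β |ω̂_n|²`. -/
def sobolevNormSq {d : ℕ} (β : ℝ) (ω : Ed d → ℂ) : ℝ :=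
  ∑' n : Fin d → ℤ, (1 + eucNorm (intVec n) ^ 2) ^ β * ‖fourierCoeffT ω n‖ ^ 2

/-- `ω` belongs to the fractional Sobolev space `H^β(𝕋^d)`:
it is `ℤ^d`-periodic, in `L²`, and `Σ_n (1+‖n‖²)^β |ω̂_n|² < ∞`. -/
def MemHbeta {d : ℕ} (β : ℝ) (ω : Ed d → ℂ) : Prop :=
  IsPeriodicC ω ∧ MemLp ω 2 (volume.restrict (unitCube d)) ∧
    Summable (fun n : Fin d → ℤ => (1 + eucNorm (intVec n) ^ 2) ^ β * ‖fourierCoeffT ω n‖ ^ 2)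

/-- The directional derivative `∂_v ψ`. -/
def dirDeriv {d : ℕ} (v : Ed d) (ψ : Ed d → ℂ) : Ed d → ℂ := fun x => fderiv ℝ ψ x v

/-- Iterated directional derivatives along a list of directions (the head of the list
being the outermost derivative). -/
def dirDerivList {d : ℕ} (l : List (Ed d)) (ψ : Ed d → ℂ) : Ed d → ℂ :=
  l.foldr dirDeriv ψ

/-- The list of directions encoding the multi-index derivative
`D^m_E = ∂_{e 0}^{m 0} ⋯ ∂_{e (s-1)}^{m (s-1)}`. -/
def multiList {d s : ℕ} (e : Fin s → Ed d) (m : Fin s → ℕ) : List (Ed d) :=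
  (List.finRange s).flatMap (fun i => List.replicate (m i) (e i))

/-- The multi-index directional derivative `D^m_E ψ = ∂_{e 0}^{m 0} ⋯ ∂_{e (s-1)}^{m (s-1)} ψ`. -/
def multiDeriv {d s : ℕ} (e : Fin s → Ed d) (m : Fin s → ℕ) (ψ : Ed d → ℂ) : Ed d → ℂ :=
  dirDerivList (multiList e m) ψ

/-- A `C^∞` test function on the torus `𝕋^d`. -/
def IsTestFun {d : ℕ} (ψ : Ed d → ℂ) : Prop :=
  ContDiff ℝ (⊤ : ℕ∞) ψ ∧ IsPeriodicC ψ

/-- The distributional derivative of `ω` along the list of directions `l` is (given by) an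
`L²(𝕋^d)` function: there is a periodic `g ∈ L²` with
`⟨g, ψ⟩ = (-1)^{|l|} ⟨ω, D_l ψ⟩` for every test function `ψ`. -/
def HasL2DerivAlong {d : ℕ} (ω : Ed d → ℂ) (l : List (Ed d)) : Prop :=
  ∃ g : Ed d → ℂ, IsPeriodicC g ∧ MemLp g 2 (volume.restrict (unitCube d)) ∧
    ∀ ψ : Ed d → ℂ, IsTestFun ψ →
      pairingC g ψ = (-1 : ℂ) ^ l.length * pairingC ω (dirDerivList l ψ)

/-- A subspace `V ⊆ ℝ^d` has the Diophantine property. -/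
def DiophantineSubspace {d : ℕ} (V : Submodule ℝ (Ed d)) : Prop :=
  ∃ K : ℝ, 0 < K ∧ ∀ n : Fin d → ℤ, n ≠ 0 →
    ∀ (r : ℕ) (v : Fin r → Ed d),
      (∀ j, v j ∈ V) →
      (∀ j k, dotProduct (v j) (v k) = if j = k then 1 else 0) →
      Submodule.span ℝ (Set.range v) = V →
      K * eucNorm (intVec n) ^ (-(d : ℝ)) ≤ ∑ j, |dotProduct (intVec n) (v j)|

end

/-!
On the Fourier side the decomposition asks, for each `n ≠ 0`, for coefficients `c_j` with
`∑ j, w_j c_j = ψ̂_n`, where `w_j = |n·v_j|^γ` and `γ = 2^{-k}`. The minimal-norm solution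
`c_j = w_j ψ̂_n / ∑ w_i²` has `|c_j|² ≤ |ψ̂_n|² / ∑ w_i²`. Some `|n·v_j|` is at least the mean
`(1/r) ∑ |n·v_i| ≥ K₀ ‖n‖^{-d} / r` by the Diophantine property, so
`(∑ w_i²)⁻¹ ≤ (r/K₀)^{2γ} ‖n‖^{2dγ} ≤ (r/K₀)^{2γ} (1 + ‖n‖²)^{β/2}` as `dγ < β/2`. This loss of
half the Sobolev weight is exactly the gap between `H^β` and `H^{β/2}`, and the `θ_j` are then
synthesized from their coefficients by Riesz–Fischer for the Fourier basis of `L²(𝕋^d)`.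
-/

open UnitAddTorus

noncomputable section

section Torus

variable {d : ℕ}

def torusProj (x : Ed d) : UnitAddTorus (Fin d) := fun i => (x i : UnitAddCircle)

/-- The probability Haar measure for which Mathlib's `mFourierBasis` is a Hilbert basis; it is not
the `volume` of the global `MeasureSpace (AddCircle 1)` instance. -/
abbrev torusVolume (d : ℕ) : Measure (UnitAddTorus (Fin d)) :=
  Measure.pi fun _ => AddCircle.haarAddCircle

lemma torusProj_add_intVec (x : Ed d) (n : Fin d → ℤ) :
    torusProj (x + intVec n) = torusProj x := by
  funext i
  simp [torusProj, intVec]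

lemma measurable_torusProj : Measurable (torusProj (d := d)) :=
  measurable_pi_lambda _ fun i => AddCircle.measurable_mk'.comp (measurable_pi_apply i)

lemma mFourier_neg_torusProj (n : Fin d → ℤ) (x : Ed d) :
    mFourier (-n) (torusProj x) =
      Complex.exp (-(2 * Real.pi * Complex.I) * ∑ i, (n i : ℂ) * (x i : ℂ)) := by
  simp only [mFourier, ContinuousMap.coe_mk, torusProj, Pi.neg_apply, fourier_coe_apply,
    Finset.mul_sum, Complex.exp_sum]
  refine Finset.prod_congr rfl fun i _ => ?_
  congr 1
  push_cast
  ring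

lemma restrict_unitCube_eq_restrict_Ioc :
    volume.restrict (unitCube d) =
      volume.restrict {x : Ed d | ∀ i, x i ∈ Set.Ioc ((0 : Ed d) i) ((0 : Ed d) i + 1)} := by
  have hIco : unitCube d = Set.univ.pi fun _ => Set.Ico 0 1 := by ext; simp [unitCube]
  have hIoc : {x : Ed d | ∀ i, x i ∈ Set.Ioc ((0 : Ed d) i) ((0 : Ed d) i + 1)} =
      Set.univ.pi fun _ => Set.Ioc 0 1 := by ext; simp
  rw [hIco, hIoc]
  exact Measure.restrict_congr_set (Measure.ae_eq_set_pi fun _ _ => Ico_ae_eq_Ioc)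

lemma measurePreserving_torusProj :
    MeasurePreserving torusProj (volume.restrict (unitCube d)) (torusVolume d) := by
  refine ⟨measurable_torusProj, Measure.ext fun s hs => ?_⟩
  rw [Measure.map_apply measurable_torusProj hs, ← lintegral_indicator_one hs,
    ← lintegral_indicator_one (measurable_torusProj hs), restrict_unitCube_eq_restrict_Ioc]
  exact (lintegral_preimage (d := Fin d) (s.indicator 1) 0).symm

lemma fourierCoeffT_comp_torusProj (f : UnitAddTorus (Fin d) → ℂ) (n : Fin d → ℤ) :
    fourierCoeffT (f ∘ torusProj) n = mFourierCoeff f n := by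
  rw [mFourierCoeff_eq_integral f n 0, fourierCoeffT, restrict_unitCube_eq_restrict_Ioc]
  refine integral_congr_ae (ae_of_all _ fun x => ?_)
  dsimp only
  rw [Function.comp_apply, smul_eq_mul, mul_comm, ← mFourier_neg_torusProj]
  rfl

lemma exists_isPeriodicC_fourierCoeffT_eq (c : (Fin d → ℤ) → ℂ)
    (hc : Summable fun n => ‖c n‖ ^ 2) :
    ∃ θ : Ed d → ℂ, IsPeriodicC θ ∧ MemLp θ 2 (volume.restrict (unitCube d)) ∧
      ∀ n, fourierCoeffT θ n = c n := by
  have hc2 : Memℓp c 2 := (memℓp_gen_iff (by norm_num)).2 (by simpa using hc)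
  set f : Lp ℂ 2 (torusVolume d) := mFourierBasis.repr.symm ⟨c, hc2⟩
  refine ⟨f ∘ torusProj, fun x n => ?_,
    (Lp.memLp f).comp_measurePreserving measurePreserving_torusProj, fun n => ?_⟩
  · simp only [Function.comp_apply, torusProj_add_intVec]
  · rw [fourierCoeffT_comp_torusProj, ← mFourierBasis_repr, LinearIsometryEquiv.apply_symm_apply]

end Torus

section Sobolev

variable {d : ℕ}

abbrev sobolevWeight (n : Fin d → ℤ) : ℝ := 1 + eucNorm (intVec n) ^ 2

lemma one_le_sobolevWeight (n : Fin d → ℤ) : 1 ≤ sobolevWeight n := by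
  simp only [sobolevWeight]
  linarith [sq_nonneg (eucNorm (intVec n))]

lemma exists_memHbeta_fourierCoeffT_eq {α β C : ℝ} (hα : 0 ≤ α) (hC : 0 ≤ C)
    {ψ : Ed d → ℂ} (hψ : Summable fun n => sobolevWeight n ^ β * ‖fourierCoeffT ψ n‖ ^ 2)
    (c : (Fin d → ℤ) → ℂ)
    (hc : ∀ n, sobolevWeight n ^ α * ‖c n‖ ^ 2 ≤
      C ^ 2 * (sobolevWeight n ^ β * ‖fourierCoeffT ψ n‖ ^ 2)) :
    ∃ θ : Ed d → ℂ, MemHbeta α θ ∧ (∀ n, fourierCoeffT θ n = c n) ∧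
      Real.sqrt (sobolevNormSq α θ) ≤ C * Real.sqrt (sobolevNormSq β ψ) := by
  have hcα : Summable fun n => sobolevWeight n ^ α * ‖c n‖ ^ 2 :=
    .of_nonneg_of_le (fun n => by positivity) hc (hψ.mul_left _)
  have hc2 : Summable fun n => ‖c n‖ ^ 2 :=
    .of_nonneg_of_le (fun n => by positivity)
      (fun n => le_mul_of_one_le_left (by positivity)
        (Real.one_le_rpow (one_le_sobolevWeight n) hα))
      hcα
  obtain ⟨θ, hper, hL2, hθ⟩ := exists_isPeriodicC_fourierCoeffT_eq c hc2
  have hnorm : sobolevNormSq α θ ≤ C ^ 2 * sobolevNormSq β ψ := by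
    simp only [sobolevNormSq, hθ, ← tsum_mul_left]
    exact hcα.tsum_le_tsum hc (hψ.mul_left _)
  refine ⟨θ, ⟨hper, hL2, by simpa only [hθ] using hcα⟩, hθ, ?_⟩
  calc Real.sqrt (sobolevNormSq α θ) ≤ Real.sqrt (C ^ 2 * sobolevNormSq β ψ) :=
        Real.sqrt_le_sqrt hnorm
    _ = C * Real.sqrt (sobolevNormSq β ψ) := by
        rw [Real.sqrt_mul (sq_nonneg C), Real.sqrt_sq hC]

end Sobolev

section Weights

variable {ι : Type*} [Fintype ι]

lemma rpow_le_sum_sq_rpow_abs [Nonempty ι] {a : ι → ℝ} {γ c : ℝ} (hγ : 0 ≤ γ) (hc : 0 ≤ c)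
    (h : c ≤ ∑ j, |a j|) :
    (c / Fintype.card ι) ^ (2 * γ) ≤ ∑ j, (|a j| ^ γ) ^ 2 := by
  have hcard : (0 : ℝ) < Fintype.card ι := by exact_mod_cast Fintype.card_pos
  obtain ⟨j, -, hj⟩ := Finset.exists_le_of_sum_le (f := fun _ => c / Fintype.card ι)
    (g := fun j => |a j|) Finset.univ_nonempty (by simpa [mul_div_cancel₀ _ hcard.ne'] using h)
  calc (c / Fintype.card ι) ^ (2 * γ) ≤ |a j| ^ (2 * γ) :=
        Real.rpow_le_rpow (by positivity) hj (by positivity)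
    _ = (|a j| ^ γ) ^ 2 := by rw [mul_comm, Real.rpow_mul (abs_nonneg _)]; norm_cast
    _ ≤ ∑ j, (|a j| ^ γ) ^ 2 :=
        Finset.single_le_sum (f := fun j => (|a j| ^ γ) ^ 2) (fun j _ => sq_nonneg _)
          (Finset.mem_univ j)

lemma inv_sum_sq_rpow_abs_le {a : ι → ℝ} {γ c : ℝ} (hγ : 0 ≤ γ) (hc : 0 < c)
    (h : c ≤ ∑ j, |a j|) :
    0 < ∑ j, (|a j| ^ γ) ^ 2 ∧ (∑ j, (|a j| ^ γ) ^ 2)⁻¹ ≤ (Fintype.card ι / c) ^ (2 * γ) := by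
  have : Nonempty ι := by
    by_contra hι
    simp [not_nonempty_iff.mp hι] at h
    linarith
  have hpos : 0 < (c / Fintype.card ι) ^ (2 * γ) := by
    have : (0 : ℝ) < Fintype.card ι := by exact_mod_cast Fintype.card_pos
    positivity
  have hle := rpow_le_sum_sq_rpow_abs hγ hc.le h
  refine ⟨hpos.trans_le hle, (inv_anti₀ hpos hle).trans_eq ?_⟩
  rw [← Real.inv_rpow (by positivity), inv_div]

lemma eucNorm_intVec_pos {d : ℕ} {n : Fin d → ℤ} (hn : n ≠ 0) : 0 < eucNorm (intVec n) := by
  obtain ⟨i, hi⟩ := Function.ne_iff.mp hn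
  have hi' : (n i : ℝ) ≠ 0 := by exact_mod_cast hi
  refine Real.sqrt_pos.2 (lt_of_lt_of_le ?_ (Finset.single_le_sum
    (f := fun j => intVec n j ^ 2) (fun j _ => sq_nonneg _) (Finset.mem_univ i)))
  simp only [intVec]
  positivity

lemma inv_sum_sq_rpow_abs_dotProduct_le {d r : ℕ} {K₀ γ : ℝ} (hK₀ : 0 < K₀) (hγ : 0 ≤ γ)
    {v : Fin r → Ed d} {n : Fin d → ℤ} (hn : n ≠ 0)
    (h : K₀ * eucNorm (intVec n) ^ (-(d : ℝ)) ≤ ∑ j, |dotProduct (intVec n) (v j)|) :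
    0 < ∑ j, (|dotProduct (intVec n) (v j)| ^ γ) ^ 2 ∧
      (∑ j, (|dotProduct (intVec n) (v j)| ^ γ) ^ 2)⁻¹ ≤
        ((r / K₀) ^ γ) ^ 2 * sobolevWeight n ^ (d * γ) := by
  have he := eucNorm_intVec_pos hn
  set e := eucNorm (intVec n)
  obtain ⟨hD, hinv⟩ := inv_sum_sq_rpow_abs_le hγ (by positivity) h
  refine ⟨hD, ?_⟩
  calc _ ≤ _ := hinv
    _ = ((r / K₀) ^ γ) ^ 2 * (e ^ 2) ^ (d * γ) := by
      rw [Fintype.card_fin, Real.rpow_neg he.le, div_mul_eq_div_div, div_inv_eq_mul,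
        Real.mul_rpow (by positivity) (by positivity), ← Real.rpow_mul he.le,
        ← Real.rpow_natCast e 2, ← Real.rpow_mul he.le, ← Real.rpow_natCast (_ ^ γ),
        ← Real.rpow_mul (by positivity)]
      push_cast
      ring_nf
    _ ≤ _ := by
      gcongr
      linarith

end Weights

/-- The minimal-norm solution `c` of `∑ j, w j * c j = z`. -/
def minNormSolution {ι : Type*} [Fintype ι] (w : ι → ℝ) (z : ℂ) (j : ι) : ℂ :=
  ((w j / ∑ i, w i ^ 2 : ℝ) : ℂ) * z

section MinNormSolution

variable {ι : Type*} [Fintype ι] {w : ι → ℝ}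

lemma sum_mul_minNormSolution (hw : ∑ i, w i ^ 2 ≠ 0) (z : ℂ) :
    ∑ j, (w j : ℂ) * minNormSolution w z j = z := by
  have hw' : (∑ i, (w i : ℂ) ^ 2) ≠ 0 := by exact_mod_cast hw
  simp only [minNormSolution]
  push_cast
  simp_rw [← mul_assoc, ← Finset.sum_mul, mul_div_assoc', ← pow_two, ← Finset.sum_div,
    div_self hw', one_mul]

lemma norm_minNormSolution_sq_le (hw : 0 < ∑ i, w i ^ 2) (z : ℂ) (j : ι) :
    ‖minNormSolution w z j‖ ^ 2 ≤ (∑ i, w i ^ 2)⁻¹ * ‖z‖ ^ 2 := by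
  rw [minNormSolution, norm_mul, Complex.norm_real, Real.norm_eq_abs, mul_pow, sq_abs, div_pow]
  gcongr
  calc w j ^ 2 / (∑ i, w i ^ 2) ^ 2
      ≤ (∑ i, w i ^ 2) / (∑ i, w i ^ 2) ^ 2 := by
        gcongr
        exact Finset.single_le_sum (f := fun i => w i ^ 2) (fun i _ => sq_nonneg _)
          (Finset.mem_univ j)
    _ = (∑ i, w i ^ 2)⁻¹ := by field_simp

lemma rpow_mul_norm_minNormSolution_sq_le {z : ℂ} {W C β : ℝ} (hW : 0 < W)
    (hw : 0 < ∑ i, w i ^ 2) (h : (∑ i, w i ^ 2)⁻¹ ≤ C ^ 2 * W ^ (β / 2)) (j : ι) :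
    W ^ (β / 2) * ‖minNormSolution w z j‖ ^ 2 ≤ C ^ 2 * (W ^ β * ‖z‖ ^ 2) := by
  calc W ^ (β / 2) * ‖minNormSolution w z j‖ ^ 2
      ≤ W ^ (β / 2) * ((C ^ 2 * W ^ (β / 2)) * ‖z‖ ^ 2) := by
        gcongr
        exact (norm_minNormSolution_sq_le hw z j).trans (by gcongr)
    _ = C ^ 2 * (W ^ β * ‖z‖ ^ 2) := by
        rw [← add_halves β, Real.rpow_add hW, add_halves]
        ring

end MinNormSolution

theorem statement_13_general {d r : ℕ}
    (V : Submodule ℝ (Ed d)) (hdio : DiophantineSubspace V)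
    (v : Fin r → Ed d) (hvmem : ∀ j, v j ∈ V)
    (hvorth : ∀ j k, dotProduct (v j) (v k) = if j = k then 1 else 0)
    (hvspan : Submodule.span ℝ (Set.range v) = V)
    (β : ℝ)
    (k : ℕ) (hk : (d : ℝ) / 2 ^ k < β / 2) :
    ∃ K : ℝ, ∀ ψ : Ed d → ℂ, MemHbeta β ψ →
      ∃ θ : Fin r → (Ed d → ℂ),
        (∀ j, MemHbeta (β / 2) (θ j) ∧ fourierCoeffT (θ j) 0 = 0 ∧
          Real.sqrt (sobolevNormSq (β / 2) (θ j)) ≤ K * Real.sqrt (sobolevNormSq β ψ)) ∧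
        (∀ n : Fin d → ℤ, n ≠ 0 →
          fourierCoeffT ψ n =
            ∑ j, (|dotProduct (intVec n) (v j)| ^ ((1 : ℝ) / 2 ^ k) : ℝ) *
              fourierCoeffT (θ j) n) := by
  obtain ⟨K₀, hK₀, hdio⟩ := hdio
  set γ : ℝ := 1 / 2 ^ k
  set C : ℝ := (r / K₀) ^ γ
  have hβ : 0 ≤ β / 2 := (by positivity : (0 : ℝ) ≤ d / 2 ^ k).trans hk.le
  have hinv : ∀ n ≠ 0, 0 < ∑ j, (|dotProduct (intVec n) (v j)| ^ γ) ^ 2 ∧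
      (∑ j, (|dotProduct (intVec n) (v j)| ^ γ) ^ 2)⁻¹ ≤ C ^ 2 * sobolevWeight n ^ (β / 2) := by
    intro n hn
    obtain ⟨hpos, hle⟩ := inv_sum_sq_rpow_abs_dotProduct_le (γ := γ) hK₀ (by positivity) hn
      (hdio n hn r v hvmem hvorth hvspan)
    refine ⟨hpos, hle.trans ?_⟩
    gcongr
    · exact one_le_sobolevWeight n
    · exact (mul_one_div (d : ℝ) (2 ^ k)).trans_le hk.le
  refine ⟨C, fun ψ hψ => ?_⟩
  let c (j : Fin r) (n : Fin d → ℤ) : ℂ := if n = 0 then 0 else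
    minNormSolution (fun i => |dotProduct (intVec n) (v i)| ^ γ) (fourierCoeffT ψ n) j
  have hc (j : Fin r) (n : Fin d → ℤ) : sobolevWeight n ^ (β / 2) * ‖c j n‖ ^ 2 ≤
      C ^ 2 * (sobolevWeight n ^ β * ‖fourierCoeffT ψ n‖ ^ 2) := by
    by_cases hn : n = 0
    · simp only [c, if_pos hn, norm_zero, zero_pow two_ne_zero, mul_zero]
      positivity
    · simp only [c, if_neg hn]
      exact rpow_mul_norm_minNormSolution_sq_le (by positivity) (hinv n hn).1 (hinv n hn).2 j
  choose θ hθ hθc hθnorm using fun j =>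
    exists_memHbeta_fourierCoeffT_eq hβ (by positivity) hψ.2.2 (c j) (hc j)
  refine ⟨θ, fun j => ⟨hθ j, by simp [hθc, c], hθnorm j⟩, fun n hn => ?_⟩
  simp only [hθc, c, if_neg hn]
  exact (sum_mul_minNormSolution (hinv n hn).1.ne' _).symm

/-- Let `V ⊆ ℝ^d` be a subspace with the Diophantine property, with
orthonormal basis `v_1, …, v_r`. Suppose `0 < β < 1` and `k ∈ ℕ` satisfy `d/2^k < β/2`.
Then there is a constant `K` such that every `ψ ∈ H^β(𝕋^d)` can be written as
`ψ = ψ̂_0 + Σ_j |∂_{v_j}|^{1/2^k} θ_j` with `θ_j ∈ H^{β/2}(𝕋^d)` of zero mean and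
`‖θ_j‖_{H^{β/2}} ≤ K ‖ψ‖_{H^β}`. (The fractional derivative `|∂_v|^γ θ` is the function with
Fourier coefficients `|n·v|^γ θ̂_n`, so the decomposition of `ψ` is stated as the
corresponding identity of Fourier coefficients for all `n ≠ 0`.) -/
theorem statement_13 {d r : ℕ}
    (V : Submodule ℝ (Ed d)) (hdio : DiophantineSubspace V)
    (v : Fin r → Ed d) (hvmem : ∀ j, v j ∈ V)
    (hvorth : ∀ j k, dotProduct (v j) (v k) = if j = k then 1 else 0)
    (hvspan : Submodule.span ℝ (Set.range v) = V)
    (β : ℝ) (hβ0 : 0 < β) (hβ1 : β < 1)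
    (k : ℕ) (hk : (d : ℝ) / 2 ^ k < β / 2) :
    ∃ K : ℝ, ∀ ψ : Ed d → ℂ, MemHbeta β ψ →
      ∃ θ : Fin r → (Ed d → ℂ),
        (∀ j, MemHbeta (β / 2) (θ j) ∧ fourierCoeffT (θ j) 0 = 0 ∧
          Real.sqrt (sobolevNormSq (β / 2) (θ j)) ≤ K * Real.sqrt (sobolevNormSq β ψ)) ∧
        (∀ n : Fin d → ℤ, n ≠ 0 →
          fourierCoeffT ψ n =
            ∑ j, (|dotProduct (intVec n) (v j)| ^ ((1 : ℝ) / 2 ^ k) : ℝ) *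
              fourierCoeffT (θ j) n) :=
  statement_13_general V hdio v hvmem hvorth hvspan β k hk

end
end

section
/- Let g : ℝ^D → ℝ^D be a C^∞ map such that sup_x ‖Dg(x)‖ ≤ σ < 1 and the derivatives of g of all orders up to m ≥ 1 are uniformly bounded. Then for every δ > 0 with σ + δ < 1 there exists a constant C (depending on δ, m, and the bounds on the derivatives of g up to order m) such that for every n ∈ ℕ: (a) sup_x ‖D^m(g^n)(x)‖ ≤ C(σ+δ)^n, where g^n is the n-fold composition; and (b) for every C^∞ function φ : ℝ^D → ℝ whose derivatives up to order m are uniformly bounded, sup_x ‖D^m(φ∘g^n)(x)‖ ≤ C(σ+δ)^n ‖φ‖_{C^m}. -/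
noncomputable section

/-- The `C^m` norm of `φ`: the supremum over `x` of the norms of the derivatives of `φ`
of orders `0` through `m`. -/
def CmNorm {E F : Type*} [NormedAddCommGroup E] [NormedSpace ℝ E]
    [NormedAddCommGroup F] [NormedSpace ℝ F] (m : ℕ) (φ : E → F) : ℝ :=
  ⨆ k : Fin (m + 1), ⨆ x, ‖iteratedFDeriv ℝ (k : ℕ) φ x‖

/-! Put `λ = σ + δ`. Leibniz's rule applied to `D(ψ ∘ h) = Dψ(h) ∘ Dh` splits `D^{k+1}(ψ ∘ h)`
into `Dψ(h) ∘ D^{k+1} h` plus terms each of which carries a factor `D^i h` with `1 ≤ i ≤ k`; the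
remaining factors are bounded by Faà di Bruno. For `ψ = g`, `h = g^n` and by induction on the order,
`a_n = ‖D^{k+1} g^n x‖` satisfies `a_{n+1} ≤ σ a_n + K λ^n`, hence `a_n ≤ C λ^n` once `C δ ≥ K`.
For `ψ = φ` the same splitting gives (b). -/

open Finset ContinuousLinearMap Function

section
variable {E F G : Type*} [NormedAddCommGroup E] [NormedSpace ℝ E]
  [NormedAddCommGroup F] [NormedSpace ℝ F] [NormedAddCommGroup G] [NormedSpace ℝ G]

theorem ContDiff.iterate {f : E → E} {n : WithTop ℕ∞} (hf : ContDiff ℝ n f) :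
    ∀ k : ℕ, ContDiff ℝ n f^[k]
  | 0 => contDiff_id
  | k + 1 => by rw [iterate_succ']; exact hf.comp (hf.iterate k)

theorem norm_iteratedFDeriv_succ_id_le_one (k : ℕ) (x : E) :
    ‖iteratedFDeriv ℝ (k + 1) (id : E → E) x‖ ≤ 1 := by
  rw [← norm_iteratedFDeriv_fderiv, show fderiv ℝ (id : E → E) = fun _ => .id ℝ E from
    funext fun _ => fderiv_id]
  rcases k with _ | k
  · simpa using norm_id_le
  · simp [iteratedFDeriv_const_of_ne]

theorem norm_iteratedFDeriv_succ_comp_le_sum {ψ : F → G} {h : E → F} {k : ℕ}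
    (hψ : ContDiff ℝ (k + 1) ψ) (hh : ContDiff ℝ (k + 1) h) (x : E) :
    ‖iteratedFDeriv ℝ (k + 1) (ψ ∘ h) x‖ ≤ ∑ j ∈ range (k + 1),
      (k.choose j : ℝ) * ‖iteratedFDeriv ℝ j (fderiv ℝ ψ ∘ h) x‖ *
        ‖iteratedFDeriv ℝ (k - j + 1) h x‖ := by
  have hfderiv : fderiv ℝ (ψ ∘ h) = fun y => compL ℝ E F G (fderiv ℝ ψ (h y)) (fderiv ℝ h y) :=
    funext fun y => fderiv_comp y (hψ.differentiable (by simp) _) (hh.differentiable (by simp) _)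
  rw [← norm_iteratedFDeriv_fderiv, hfderiv]
  refine ((compL ℝ E F G).norm_iteratedFDeriv_le_of_bilinear_of_le_one
    ((hψ.fderiv_right le_rfl).comp (hh.of_le (by norm_cast; omega)))
    (hh.fderiv_right le_rfl) x le_rfl (norm_compL_le ℝ E F G)).trans_eq ?_
  simp only [norm_iteratedFDeriv_fderiv]

theorem sum_range_choose_succ_le (k : ℕ) : ∑ j ∈ range k, (k.choose (j + 1) : ℝ) ≤ 2 ^ k := by
  have h := sum_range_succ' (fun j => (k.choose j : ℝ)) k
  rw [← Nat.cast_sum, Nat.sum_range_choose] at h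
  push_cast at h
  linarith

theorem norm_iteratedFDeriv_succ_comp_le {ψ : F → G} {h : E → F} {k : ℕ}
    (hψ : ContDiff ℝ (k + 1) ψ) (hh : ContDiff ℝ (k + 1) h) (x : E) {M ε A : ℝ}
    (hM : ∀ i, 1 ≤ i → i ≤ k + 1 → ‖iteratedFDeriv ℝ i ψ (h x)‖ ≤ M)
    (hε : ∀ i, 1 ≤ i → i ≤ k → ‖iteratedFDeriv ℝ i h x‖ ≤ ε) (hε0 : 0 ≤ ε) (hεA : ε ≤ A)
    (hA : 1 ≤ A) :
    ‖iteratedFDeriv ℝ (k + 1) (ψ ∘ h) x‖ ≤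
      ‖fderiv ℝ ψ (h x)‖ * ‖iteratedFDeriv ℝ (k + 1) h x‖ +
        2 ^ k * k.factorial * M * A ^ k * ε := by
  have hM0 : 0 ≤ M := (norm_nonneg _).trans (hM 1 le_rfl (by omega))
  have hfirst : ∀ j, j ≤ k → ‖iteratedFDeriv ℝ j (fderiv ℝ ψ ∘ h) x‖ ≤ k.factorial * M * A ^ k := by
    intro j hjk
    calc ‖iteratedFDeriv ℝ j (fderiv ℝ ψ ∘ h) x‖ ≤ j.factorial * M * A ^ j :=
          norm_iteratedFDeriv_comp_le (hψ.fderiv_right le_rfl) (hh.of_le (by norm_cast; omega))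
            (by exact_mod_cast hjk) x
            (fun i hi => by rw [norm_iteratedFDeriv_fderiv]; exact hM (i + 1) (by omega) (by omega))
            (fun i hi1 hi2 => (hε i hi1 (by omega)).trans (hεA.trans (le_self_pow₀ hA (by omega))))
      _ ≤ k.factorial * M * A ^ k := by gcongr
  have hrest : ∑ j ∈ range k, (k.choose (j + 1) : ℝ) *
      ‖iteratedFDeriv ℝ (j + 1) (fderiv ℝ ψ ∘ h) x‖ * ‖iteratedFDeriv ℝ (k - (j + 1) + 1) h x‖ ≤
      2 ^ k * k.factorial * M * A ^ k * ε := by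
    calc _ ≤ ∑ j ∈ range k, (k.choose (j + 1) : ℝ) * (k.factorial * M * A ^ k) * ε := by
          gcongr with j hj
          · exact hfirst _ (by simpa using hj)
          · exact hε _ (by omega) (by simp at hj; omega)
      _ ≤ 2 ^ k * (k.factorial * M * A ^ k) * ε := by
          rw [← sum_mul, ← sum_mul]
          gcongr
          exact sum_range_choose_succ_le k
      _ = 2 ^ k * k.factorial * M * A ^ k * ε := by ring
  refine (norm_iteratedFDeriv_succ_comp_le_sum hψ hh x).trans ?_
  rw [sum_range_succ', add_comm]
  simpa using hrest


theorem norm_iteratedFDeriv_succ_comp_le_of_le {ψ : F → G} {h : E → F} {k : ℕ}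
    (hψ : ContDiff ℝ (k + 1) ψ) (hh : ContDiff ℝ (k + 1) h) (x : E) {M ε A : ℝ}
    (hM : ∀ i, 1 ≤ i → i ≤ k + 1 → ‖iteratedFDeriv ℝ i ψ (h x)‖ ≤ M)
    (hε : ∀ i, 1 ≤ i → i ≤ k + 1 → ‖iteratedFDeriv ℝ i h x‖ ≤ ε) (hεA : ε ≤ A) (hA : 1 ≤ A) :
    ‖iteratedFDeriv ℝ (k + 1) (ψ ∘ h) x‖ ≤ (1 + 2 ^ k * k.factorial * A ^ k) * ε * M := by
  have hε0 : 0 ≤ ε := (norm_nonneg _).trans (hε 1 le_rfl (by omega))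
  calc ‖iteratedFDeriv ℝ (k + 1) (ψ ∘ h) x‖
      ≤ ‖fderiv ℝ ψ (h x)‖ * ‖iteratedFDeriv ℝ (k + 1) h x‖ +
          2 ^ k * k.factorial * M * A ^ k * ε :=
        norm_iteratedFDeriv_succ_comp_le hψ hh x hM (fun i hi1 hi2 => hε i hi1 (by omega))
          hε0 hεA hA
    _ ≤ M * ε + 2 ^ k * k.factorial * M * A ^ k * ε := by
        gcongr
        · exact (norm_nonneg _).trans (hM 1 le_rfl (by omega))
        · simpa using hM 1 le_rfl (by omega)
        · exact hε (k + 1) (by omega) le_rfl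
    _ = (1 + 2 ^ k * k.factorial * A ^ k) * ε * M := by ring

end

theorem le_mul_pow_of_le_mul_add {a : ℕ → ℝ} {σ δ C K : ℝ} (hσ : 0 ≤ σ) (hδ : 0 ≤ δ)
    (h0 : a 0 ≤ C) (hK : K ≤ C * δ) (hrec : ∀ n, a (n + 1) ≤ σ * a n + K * (σ + δ) ^ n) :
    ∀ n, a n ≤ C * (σ + δ) ^ n
  | 0 => by simpa using h0
  | n + 1 => by
    have hσδ : 0 ≤ σ + δ := by positivity
    calc a (n + 1) ≤ σ * a n + K * (σ + δ) ^ n := hrec n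
      _ ≤ σ * (C * (σ + δ) ^ n) + C * δ * (σ + δ) ^ n := by
          gcongr
          exact le_mul_pow_of_le_mul_add hσ hδ h0 hK hrec n
      _ = C * (σ + δ) ^ (n + 1) := by ring

section
variable {E : Type*} [NormedAddCommGroup E] [NormedSpace ℝ E] {g : E → E} {σ δ B : ℝ}

theorem exists_norm_iteratedFDeriv_iterate_le (hDg : ∀ x, ‖fderiv ℝ g x‖ ≤ σ) (hδ : 0 < δ)
    (hσδ : σ + δ ≤ 1) :
    ∀ {m : ℕ}, ContDiff ℝ m g → (∀ k, 1 ≤ k → k ≤ m → ∀ x, ‖iteratedFDeriv ℝ k g x‖ ≤ B) →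
      ∃ C, 1 ≤ C ∧ ∀ k, 1 ≤ k → k ≤ m → ∀ n x,
        ‖iteratedFDeriv ℝ k g^[n] x‖ ≤ C * (σ + δ) ^ n
  | 0, _, _ => ⟨1, le_rfl, fun k hk1 hk2 => by omega⟩
  | m + 1, hg, hB => by
    obtain ⟨C, hC1, hC⟩ := exists_norm_iteratedFDeriv_iterate_le (m := m) hDg hδ hσδ
      (hg.of_le (by norm_cast; omega)) fun k hk1 hk2 => hB k hk1 (by omega)
    set K := 2 ^ m * m.factorial * B * C ^ m * C
    refine ⟨max C (K / δ), le_max_of_le_left hC1, fun k hk1 hk2 n x => ?_⟩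
    have hσ : 0 ≤ σ := (norm_nonneg _).trans (hDg x)
    have hσδ₀ : 0 ≤ σ + δ := by positivity
    rcases hk2.lt_or_eq with hk | rfl
    · exact (hC k hk1 (by omega) n x).trans (by gcongr; exact le_max_left _ _)
    refine le_mul_pow_of_le_mul_add (a := fun n => ‖iteratedFDeriv ℝ (m + 1) g^[n] x‖) (K := K)
      hσ hδ.le ?_ ?_ (fun n => ?_) n
    · simpa using (norm_iteratedFDeriv_succ_id_le_one m x).trans (hC1.trans (le_max_left _ _))
    · exact (div_mul_cancel₀ K hδ.ne').symm.le.trans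
        (mul_le_mul_of_nonneg_right (le_max_right _ _) hδ.le)
    calc ‖iteratedFDeriv ℝ (m + 1) g^[n + 1] x‖
        ≤ ‖fderiv ℝ g (g^[n] x)‖ * ‖iteratedFDeriv ℝ (m + 1) g^[n] x‖ +
            2 ^ m * m.factorial * B * C ^ m * (C * (σ + δ) ^ n) := by
          rw [iterate_succ']
          exact norm_iteratedFDeriv_succ_comp_le (by exact_mod_cast hg)
            (by exact_mod_cast hg.iterate n) x
            (fun i hi1 hi2 => hB i hi1 hi2 _) (fun i hi1 hi2 => hC i hi1 (by omega) n x)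
            (by positivity) (mul_le_of_le_one_right (by positivity) (pow_le_one₀ hσδ₀ hσδ)) hC1
      _ ≤ σ * ‖iteratedFDeriv ℝ (m + 1) g^[n] x‖ +
            2 ^ m * m.factorial * B * C ^ m * (C * (σ + δ) ^ n) := by gcongr; exact hDg _
      _ = σ * ‖iteratedFDeriv ℝ (m + 1) g^[n] x‖ + K * (σ + δ) ^ n := by ring

end

theorem norm_iteratedFDeriv_le_cmNorm {E F : Type*} [NormedAddCommGroup E] [NormedSpace ℝ E]
    [NormedAddCommGroup F] [NormedSpace ℝ F] {φ : E → F} {m k : ℕ} (hk : k ≤ m)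
    (hφ : ∃ B, ∀ x, ‖iteratedFDeriv ℝ k φ x‖ ≤ B) (x : E) :
    ‖iteratedFDeriv ℝ k φ x‖ ≤ CmNorm m φ := by
  obtain ⟨B, hB⟩ := hφ
  calc ‖iteratedFDeriv ℝ k φ x‖ ≤ ⨆ y, ‖iteratedFDeriv ℝ k φ y‖ :=
        le_ciSup ⟨B, by rintro _ ⟨y, rfl⟩; exact hB y⟩ x
    _ ≤ CmNorm m φ :=
        le_ciSup (f := fun i : Fin (m + 1) => ⨆ y, ‖iteratedFDeriv ℝ i φ y‖)
          (Set.finite_range _).bddAbove ⟨k, by omega⟩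

theorem Set.Finite.exists_forall_le_of_forall_exists {ι α : Type*} {s : Set ι} (hs : s.Finite)
    {f : ι → α → ℝ} (h : ∀ i ∈ s, ∃ B, ∀ x, f i x ≤ B) : ∃ B, ∀ i ∈ s, ∀ x, f i x ≤ B := by
  obtain ⟨B, hB⟩ := (hs.bddAbove_biUnion (S := fun i => Set.range (f i))).2 fun i hi => by
    obtain ⟨B, hB⟩ := h i hi
    exact ⟨B, by rintro _ ⟨x, rfl⟩; exact hB x⟩
  exact ⟨B, fun i hi x => hB (Set.mem_biUnion hi ⟨x, rfl⟩)⟩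

theorem statement_15_general {D : ℕ} (g : (Fin D → ℝ) → (Fin D → ℝ))
    (hg : ContDiff ℝ (⊤ : ℕ∞) g)
    (σ : ℝ) (hDg : ∀ x, ‖fderiv ℝ g x‖ ≤ σ)
    (m : ℕ) (hm : 1 ≤ m)
    (hbd : ∀ k : ℕ, 1 ≤ k → k ≤ m → ∃ B : ℝ, ∀ x, ‖iteratedFDeriv ℝ k g x‖ ≤ B)
    (δ : ℝ) (hδ : 0 < δ) (hσδ : σ + δ < 1) :
    ∃ C : ℝ,
      (∀ (n : ℕ) (x : Fin D → ℝ), ‖iteratedFDeriv ℝ m (g^[n]) x‖ ≤ C * (σ + δ) ^ n) ∧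
      (∀ φ : (Fin D → ℝ) → ℝ, ContDiff ℝ (⊤ : ℕ∞) φ →
        (∀ k : ℕ, k ≤ m → ∃ B : ℝ, ∀ x, ‖iteratedFDeriv ℝ k φ x‖ ≤ B) →
        ∀ (n : ℕ) (x : Fin D → ℝ),
          ‖iteratedFDeriv ℝ m (φ ∘ g^[n]) x‖ ≤ C * (σ + δ) ^ n * CmNorm m φ) := by
  obtain ⟨B, hB⟩ := (Set.finite_Icc 1 m).exists_forall_le_of_forall_exists
    (f := fun k x => ‖iteratedFDeriv ℝ k g x‖) fun k hk => hbd k hk.1 hk.2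
  obtain ⟨C, hC1, hC⟩ := exists_norm_iteratedFDeriv_iterate_le hDg hδ hσδ.le
    (hg.of_le (by exact_mod_cast le_top)) fun k hk1 hk2 => hB k ⟨hk1, hk2⟩
  obtain ⟨k, rfl⟩ : ∃ k, m = k + 1 := ⟨m - 1, by omega⟩
  have hσ : 0 ≤ σ := (norm_nonneg _).trans (hDg 0)
  have hK : 0 ≤ 2 ^ k * k.factorial * C ^ k := by positivity
  refine ⟨(1 + 2 ^ k * k.factorial * C ^ k) * C, fun n x => ?_, fun φ hφ hφbd n x => ?_⟩
  · calc ‖iteratedFDeriv ℝ (k + 1) g^[n] x‖ ≤ 1 * C * (σ + δ) ^ n := by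
          simpa using hC (k + 1) (by omega) le_rfl n x
      _ ≤ (1 + 2 ^ k * k.factorial * C ^ k) * C * (σ + δ) ^ n := by gcongr; linarith
  have hM := fun i hi => norm_iteratedFDeriv_le_cmNorm (m := k + 1) (k := i) hi (hφbd i hi)
  refine (norm_iteratedFDeriv_succ_comp_le_of_le (hφ.of_le (by exact_mod_cast le_top))
    ((hg.iterate n).of_le (by exact_mod_cast le_top)) x (fun i _ hi => hM i hi _)
    (fun i hi1 hi2 => hC i hi1 hi2 n x)
    (mul_le_of_le_one_right (by positivity) (pow_le_one₀ (by positivity) hσδ.le)) hC1).trans_eq ?_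
  ring

/-- Let `g : ℝ^D → ℝ^D` be a `C^∞` map with `sup ‖Dg‖ ≤ σ < 1` and with
uniformly bounded derivatives of all orders up to `m ≥ 1`. Then for every `δ > 0` with
`σ + δ < 1` there is a constant `C` such that for every `n ∈ ℕ`:
(a) `sup_x ‖D^m(g^n)(x)‖ ≤ C (σ+δ)^n`; and (b) for every `C^∞` function `φ : ℝ^D → ℝ` with
uniformly bounded derivatives up to order `m`,
`sup_x ‖D^m(φ ∘ g^n)(x)‖ ≤ C (σ+δ)^n ‖φ‖_{C^m}`. -/
theorem statement_15 {D : ℕ} (g : (Fin D → ℝ) → (Fin D → ℝ))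
    (hg : ContDiff ℝ (⊤ : ℕ∞) g)
    (σ : ℝ) (hσ : σ < 1) (hDg : ∀ x, ‖fderiv ℝ g x‖ ≤ σ)
    (m : ℕ) (hm : 1 ≤ m)
    (hbd : ∀ k : ℕ, 1 ≤ k → k ≤ m → ∃ B : ℝ, ∀ x, ‖iteratedFDeriv ℝ k g x‖ ≤ B)
    (δ : ℝ) (hδ : 0 < δ) (hσδ : σ + δ < 1) :
    ∃ C : ℝ,
      (∀ (n : ℕ) (x : Fin D → ℝ), ‖iteratedFDeriv ℝ m (g^[n]) x‖ ≤ C * (σ + δ) ^ n) ∧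
      (∀ φ : (Fin D → ℝ) → ℝ, ContDiff ℝ (⊤ : ℕ∞) φ →
        (∀ k : ℕ, k ≤ m → ∃ B : ℝ, ∀ x, ‖iteratedFDeriv ℝ k φ x‖ ≤ B) →
        ∀ (n : ℕ) (x : Fin D → ℝ),
          ‖iteratedFDeriv ℝ m (φ ∘ g^[n]) x‖ ≤ C * (σ + δ) ^ n * CmNorm m φ) :=
  statement_15_general g hg σ hDg m hm hbd δ hδ hσδ

end
end
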